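/- arXiv:1803.06218 — 7 statements merged into one kernel-verified Lean document; each statement's English description precedes it below -/
import Mathlib

section
/- Assume H = G^θ. Let X be a subset of the coset space G/H containing the origin o = eH. Then X is antipodal if and only if: for every coset gH ∈ X one has φ(g) ∈ H and φ(g)² = e, and for all cosets g₁H, g₂H ∈ X the elements φ(g₁) and φ(g₂) commute in G. -/
/-!
Since `θ` is involutive, `θ (φ g) = (φ g)⁻¹`, so `φ g` lies in `H = G^θ` exactly when it is an
involution. Moreover `φ (g₂⁻¹ g₁)` is conjugate to `φ g₁ (φ g₂)⁻¹`, so `X` is antipodal iff all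
products `φ g₁ (φ g₂)⁻¹` are involutions. Taking `g₂ = e` shows each `φ g` is an involution, and
for two involutions `a, b` the product `a b⁻¹ = a b` is an involution iff `a` and `b` commute.
-/

/-- `X ⊆ G ⧸ H` is antipodal if `φ(g₂⁻¹g₁) ∈ H` for all cosets `g₁H, g₂H ∈ X`,
where `φ(g) = g·θ(g)⁻¹` is the Cartan quadratic map. -/
def IsAntipodal {G : Type*} [Group G] (θ : G → G) (H : Subgroup G) (X : Set (G ⧸ H)) : Prop :=
  ∀ g₁ g₂ : G, (QuotientGroup.mk g₁ : G ⧸ H) ∈ X → (QuotientGroup.mk g₂ : G ⧸ H) ∈ X →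
    (g₂⁻¹ * g₁) * (θ (g₂⁻¹ * g₁))⁻¹ ∈ H

/-- `X` is a maximal antipodal set if it is antipodal and not properly contained in
any other antipodal subset of `G ⧸ H`. -/
def MaximalAntipodal {G : Type*} [Group G] (θ : G → G) (H : Subgroup G) (X : Set (G ⧸ H)) : Prop :=
  IsAntipodal θ H X ∧ ∀ Y : Set (G ⧸ H), IsAntipodal θ H Y → X ⊆ Y → Y = X

section Group

variable {G : Type*} [Group G]

theorem conj_inv_sq_eq_one_iff (g x : G) : (g⁻¹ * x * g) ^ 2 = 1 ↔ x ^ 2 = 1 := by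
  rw [← conj_eq_one_iff (a := g⁻¹) (b := x ^ 2), ← conj_pow, inv_inv]

theorem mul_inv_sq_eq_one_iff_commute {a b : G} (ha : a ^ 2 = 1) (hb : b ^ 2 = 1) :
    (a * b⁻¹) ^ 2 = 1 ↔ Commute a b := by
  have ha' : a⁻¹ = a := inv_eq_iff_mul_eq_one.2 (by rwa [← pow_two])
  have hb' : b⁻¹ = b := inv_eq_iff_mul_eq_one.2 (by rwa [← pow_two])
  rw [hb', commute_iff_eq, pow_two, ← inv_eq_iff_mul_eq_one, mul_inv_rev, ha', hb', eq_comm]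

end Group

section Cartan

variable {G : Type*} [Group G] (θ : G →* G)

def cartanMap (g : G) : G := g * (θ g)⁻¹

theorem cartanMap_one : cartanMap θ 1 = 1 := by
  simp [cartanMap]

theorem cartanMap_inv_mul (g₁ g₂ : G) :
    cartanMap θ (g₂⁻¹ * g₁) = g₂⁻¹ * (cartanMap θ g₁ * (cartanMap θ g₂)⁻¹) * g₂ := by
  simp only [cartanMap, map_mul, map_inv]
  group

theorem map_cartanMap (hθ : ∀ g, θ (θ g) = g) (g : G) :
    θ (cartanMap θ g) = (cartanMap θ g)⁻¹ := by
  simp [cartanMap, hθ]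

theorem cartanMap_mem_iff_sq_eq_one (hθ : ∀ g, θ (θ g) = g) {H : Subgroup G}
    (hH : ∀ g, g ∈ H ↔ θ g = g) (g : G) : cartanMap θ g ∈ H ↔ cartanMap θ g ^ 2 = 1 := by
  rw [hH, map_cartanMap θ hθ, inv_eq_iff_mul_eq_one, pow_two]

theorem isAntipodal_iff_sq_eq_one (hθ : ∀ g, θ (θ g) = g) {H : Subgroup G}
    (hH : ∀ g, g ∈ H ↔ θ g = g) (X : Set (G ⧸ H)) :
    IsAntipodal θ H X ↔ ∀ g₁ g₂ : G, (QuotientGroup.mk g₁ : G ⧸ H) ∈ X →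
      (QuotientGroup.mk g₂ : G ⧸ H) ∈ X → (cartanMap θ g₁ * (cartanMap θ g₂)⁻¹) ^ 2 = 1 := by
  refine forall₂_congr fun g₁ g₂ => ?_
  change _ → _ → cartanMap θ (g₂⁻¹ * g₁) ∈ H ↔ _
  rw [cartanMap_mem_iff_sq_eq_one θ hθ hH, cartanMap_inv_mul, conj_inv_sq_eq_one_iff]

end Cartan

/-- assuming `H = G^θ`, a subset `X ⊆ G/H` containing the origin is antipodal
iff `φ(g) ∈ H` and `φ(g)² = 1` for every coset `gH ∈ X`, and `φ(g₁)`, `φ(g₂)` commute for all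
cosets `g₁H, g₂H ∈ X`, where `φ(g) = g·θ(g)⁻¹`. -/
theorem stmt_0 {G : Type*} [Group G] (θ : G →* G) (hθ : ∀ g, θ (θ g) = g)
    (H : Subgroup G) (hH : ∀ g, g ∈ H ↔ θ g = g)
    (X : Set (G ⧸ H)) (hX : (QuotientGroup.mk (1 : G) : G ⧸ H) ∈ X) :
    IsAntipodal (⇑θ) H X ↔
      ((∀ g : G, (QuotientGroup.mk g : G ⧸ H) ∈ X →
          g * (θ g)⁻¹ ∈ H ∧ (g * (θ g)⁻¹) ^ 2 = 1) ∧
        ∀ g₁ g₂ : G, (QuotientGroup.mk g₁ : G ⧸ H) ∈ X → (QuotientGroup.mk g₂ : G ⧸ H) ∈ X →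
          Commute (g₁ * (θ g₁)⁻¹) (g₂ * (θ g₂)⁻¹)) := by
  rw [isAntipodal_iff_sq_eq_one θ hθ hH]
  constructor
  · intro hprod
    have hsq (g : G) (hg : (QuotientGroup.mk g : G ⧸ H) ∈ X) : cartanMap θ g ^ 2 = 1 := by
      simpa [cartanMap_one] using hprod g 1 hg hX
    refine ⟨fun g hg => ⟨(cartanMap_mem_iff_sq_eq_one θ hθ hH g).2 (hsq g hg), hsq g hg⟩,
      fun g₁ g₂ h₁ h₂ => ?_⟩
    exact (mul_inv_sq_eq_one_iff_commute (hsq g₁ h₁) (hsq g₂ h₂)).1 (hprod g₁ g₂ h₁ h₂)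
  · rintro ⟨hinvol, hcomm⟩ g₁ g₂ h₁ h₂
    exact (mul_inv_sq_eq_one_iff_commute (hinvol g₁ h₁).2 (hinvol g₂ h₂).2).2
      (hcomm g₁ g₂ h₁ h₂)
end

section
/- Assume H = G^θ. Let X be a subset of the coset space G/H containing the origin o = eH. Then X is antipodal if and only if F₂(X) is an elementary abelian 2-subgroup of Ḡ that is generated by elements of the conjugacy class C_θ̄. -/
/-- The conjugacy class `C_θ̄ = {g θ̄ g⁻¹ : g ∈ G}` of `θ̄` in `Ḡ` (here `ι : G → Ḡ` is the
inclusion of `G` in `Ḡ = G ⋊ ⟨θ̄⟩`). -/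
def CartanConjClass {G Gb : Type*} [Group G] [Group Gb] (ι : G →* Gb) (θb : Gb) : Set Gb :=
  {x | ∃ g : G, x = ι g * θb * (ι g)⁻¹}

/-- `F₂(X) = ⟨φ(X) ∪ {θ̄}⟩ ≤ Ḡ`, where `φ(g) = g·θ(g)⁻¹` is the Cartan quadratic map. -/
def F2 {G Gb : Type*} [Group G] [Group Gb] {H : Subgroup G} (θ : G → G)
    (ι : G →* Gb) (θb : Gb) (X : Set (G ⧸ H)) : Subgroup Gb :=
  Subgroup.closure
    ({y : Gb | ∃ g : G, (QuotientGroup.mk g : G ⧸ H) ∈ X ∧ y = ι (g * (θ g)⁻¹)} ∪ {θb})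

/-- Auxiliary: the closure of a set of pairwise commuting involutions is
elementary abelian. -/
lemma closure_sq_one {G : Type*} [Group G] (S : Set G)
    (h1 : ∀ s ∈ S, s * s = 1) (hc : ∀ s ∈ S, ∀ t ∈ S, s * t = t * s) :
    ∀ a ∈ Subgroup.closure S, a * a = 1 := by
  have hcomm : ∀ a ∈ Subgroup.closure S, ∀ b ∈ Subgroup.closure S, a * b = b * a := by
    intro a ha
    induction ha using Subgroup.closure_induction with
    | mem s hs =>
      intro b hb
      induction hb using Subgroup.closure_induction with
      | mem t ht => exact hc s hs t ht
      | one => simp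
      | mul x y hx hy ihx ihy =>
        rw [← mul_assoc, ihx, mul_assoc, ihy, mul_assoc]
      | inv x hx ih => exact Commute.inv_right ih
    | one => intro b _; simp
    | mul x y hx hy ihx ihy =>
      intro b hb
      rw [mul_assoc, ihy b hb, ← mul_assoc, ihx b hb, mul_assoc]
    | inv x hx ih =>
      intro b hb
      exact Commute.inv_left (ih b hb)
  intro a ha
  induction ha using Subgroup.closure_induction with
  | mem s hs => exact h1 s hs
  | one => simp
  | mul x y hx hy ihx ihy =>
    calc x * y * (x * y) = x * (y * x) * y := by group
    _ = x * (x * y) * y := by rw [hcomm y hy x hx]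
    _ = (x * x) * (y * y) := by group
    _ = 1 := by rw [ihx, ihy, one_mul]
  | inv x hx ih =>
    rw [← mul_inv_rev, ih, inv_one]

/-- assuming `H = G^θ`, a subset `X ⊆ G/H` containing the origin is antipodal
iff `F₂(X)` is an elementary abelian 2-subgroup of `Ḡ = G ⋊ ⟨θ̄⟩` generated by elements of the
conjugacy class `C_θ̄`. -/
theorem stmt_1 {G Gb : Type*} [Group G] [Group Gb]
    (θ : G →* G) (hθ : ∀ g, θ (θ g) = g)
    (H : Subgroup G) (hH : ∀ g, g ∈ H ↔ θ g = g)
    -- `Gb` together with `ι`, `θb` is the semidirect product `Ḡ = G ⋊ ⟨θ̄⟩`: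
    (ι : G →* Gb) (hι : Function.Injective ι)
    (θb : Gb) (hb2 : θb ^ 2 = 1) (hbr : θb ∉ ι.range)
    (hconj : ∀ g : G, ι (θ g) = θb * ι g * θb⁻¹)
    (hgen : Subgroup.closure (Set.range ⇑ι ∪ {θb}) = (⊤ : Subgroup Gb))
    (X : Set (G ⧸ H)) (hX : (QuotientGroup.mk (1 : G) : G ⧸ H) ∈ X) :
    IsAntipodal (⇑θ) H X ↔
      ((∀ a ∈ F2 (⇑θ) ι θb X, a ^ 2 = 1) ∧
        ∃ S ⊆ CartanConjClass ι θb, Subgroup.closure S = F2 (⇑θ) ι θb X) := by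

  -- basic facts
  have hbb : θb * θb = 1 := by rw [← sq]; exact hb2
  have hbinv : θb⁻¹ = θb := inv_eq_of_mul_eq_one_right hbb
  have hφθ : ∀ g : G, θ (g * (θ g)⁻¹) = (g * (θ g)⁻¹)⁻¹ := by
    intro g; rw [map_mul, map_inv, hθ, mul_inv_rev, inv_inv]
  have hmemH : ∀ g : G, g * (θ g)⁻¹ ∈ H ↔ (g * (θ g)⁻¹) * (g * (θ g)⁻¹) = 1 := by
    intro g
    rw [hH, hφθ, inv_eq_iff_mul_eq_one]
  have hs : ∀ g : G, ι (g * (θ g)⁻¹) * θb = ι g * θb * (ι g)⁻¹ := by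
    intro g
    have h1 : ι ((θ : G →* G) g⁻¹) = θb * ι g⁻¹ * θb⁻¹ := hconj g⁻¹
    simp only [map_inv] at h1
    calc ι (g * (θ g)⁻¹) * θb = ι g * (ι (θ g))⁻¹ * θb := by rw [map_mul, map_inv]
      _ = ι g * (θb * (ι g)⁻¹ * θb⁻¹) * θb := by rw [h1]
      _ = ι g * θb * (ι g)⁻¹ := by group
  have key : ∀ g₁ g₂ : G, (ι (g₁ * (θ g₁)⁻¹) * θb) * (ι (g₂ * (θ g₂)⁻¹) * θb)
      = ι (g₂ * ((g₂⁻¹ * g₁) * (θ (g₂⁻¹ * g₁))⁻¹) * g₂⁻¹) := by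
    intro g₁ g₂
    have h1 : g₂ * ((g₂⁻¹ * g₁) * (θ (g₂⁻¹ * g₁))⁻¹) * g₂⁻¹
        = g₁ * θ (g₁⁻¹ * g₂) * g₂⁻¹ := by
      have h2 : (θ (g₂⁻¹ * g₁))⁻¹ = θ (g₁⁻¹ * g₂) := by
        rw [← map_inv, mul_inv_rev, inv_inv]
      rw [h2]; group
    rw [h1, hs, hs]
    calc ι g₁ * θb * (ι g₁)⁻¹ * (ι g₂ * θb * (ι g₂)⁻¹)
        = ι g₁ * (θb * ι (g₁⁻¹ * g₂) * θb⁻¹) * (θb * θb) * (ι g₂)⁻¹ := by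
          simp only [map_mul, map_inv]; group
      _ = ι g₁ * ι (θ (g₁⁻¹ * g₂)) * (ι g₂)⁻¹ := by rw [← hconj, hbb, mul_one]
      _ = ι (g₁ * θ (g₁⁻¹ * g₂) * g₂⁻¹) := by simp only [map_mul, map_inv]
  have hs2 : ∀ g : G, (ι (g * (θ g)⁻¹) * θb) * (ι (g * (θ g)⁻¹) * θb) = 1 := by
    intro g
    rw [key g g]
    simp
  -- the generating set of involutions
  set S : Set Gb := {x : Gb | ∃ g : G, (QuotientGroup.mk g : G ⧸ H) ∈ X ∧
      x = ι (g * (θ g)⁻¹) * θb} with hSdef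
  have hSsub : S ⊆ CartanConjClass ι θb := by
    rintro x ⟨g, hg, rfl⟩
    exact ⟨g, (hs g)⟩
  have hθbS : θb ∈ S := by
    refine ⟨1, hX, ?_⟩
    simp
  have hSC : Subgroup.closure S = F2 (⇑θ) ι θb X := by
    rw [F2]
    apply le_antisymm
    · apply Subgroup.closure_le _ |>.2
      rintro x ⟨g, hg, rfl⟩
      exact mul_mem (Subgroup.subset_closure (Or.inl ⟨g, hg, rfl⟩))
        (Subgroup.subset_closure (Or.inr rfl))
    · apply Subgroup.closure_le _ |>.2
      rintro x (⟨g, hg, rfl⟩ | rfl)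
      · have : ι (g * (θ g)⁻¹) = (ι (g * (θ g)⁻¹) * θb) * θb := by
          rw [mul_assoc, hbb, mul_one]
        rw [this]
        exact mul_mem (Subgroup.subset_closure ⟨g, hg, rfl⟩)
          (Subgroup.subset_closure hθbS)
      · exact Subgroup.subset_closure hθbS
  constructor
  · -- forward direction
    intro hA
    have hcommS : ∀ s ∈ S, ∀ t ∈ S, s * t = t * s := by
      rintro s ⟨g₁, hg₁, rfl⟩ t ⟨g₂, hg₂, rfl⟩
      have hφ2 : ((g₂⁻¹ * g₁) * (θ (g₂⁻¹ * g₁))⁻¹) * ((g₂⁻¹ * g₁) * (θ (g₂⁻¹ * g₁))⁻¹) = 1 :=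
        (hmemH _).1 (hA g₁ g₂ hg₁ hg₂)
      have hst2 : ((ι (g₁ * (θ g₁)⁻¹) * θb) * (ι (g₂ * (θ g₂)⁻¹) * θb))
          * ((ι (g₁ * (θ g₁)⁻¹) * θb) * (ι (g₂ * (θ g₂)⁻¹) * θb)) = 1 := by
        rw [key g₁ g₂, ← map_mul]
        have : (g₂ * ((g₂⁻¹ * g₁) * (θ (g₂⁻¹ * g₁))⁻¹) * g₂⁻¹)
            * (g₂ * ((g₂⁻¹ * g₁) * (θ (g₂⁻¹ * g₁))⁻¹) * g₂⁻¹)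
            = g₂ * (((g₂⁻¹ * g₁) * (θ (g₂⁻¹ * g₁))⁻¹)
              * ((g₂⁻¹ * g₁) * (θ (g₂⁻¹ * g₁))⁻¹)) * g₂⁻¹ := by group
        rw [this, hφ2, mul_one, mul_inv_cancel, map_one]
      have h1 := inv_eq_of_mul_eq_one_right hst2
      rw [mul_inv_rev, inv_eq_of_mul_eq_one_right (hs2 g₁),
        inv_eq_of_mul_eq_one_right (hs2 g₂)] at h1
      exact h1.symm
    have h2 : ∀ a ∈ F2 (⇑θ) ι θb X, a ^ 2 = 1 := by
      intro a ha
      rw [sq]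
      exact closure_sq_one S (by rintro s ⟨g, _, rfl⟩; exact hs2 g) hcommS a (hSC ▸ ha)
    exact ⟨h2, S, hSsub, hSC⟩
  · -- backward direction
    rintro ⟨h2, -⟩ g₁ g₂ hg₁ hg₂
    have hmem : ∀ g : G, (QuotientGroup.mk g : G ⧸ H) ∈ X →
        ι (g * (θ g)⁻¹) * θb ∈ F2 (⇑θ) ι θb X := by
      intro g hg
      rw [F2]
      exact mul_mem (Subgroup.subset_closure (Or.inl ⟨g, hg, rfl⟩))
        (Subgroup.subset_closure (Or.inr rfl))
    have hst := h2 _ (mul_mem (hmem g₁ hg₁) (hmem g₂ hg₂))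
    rw [sq, key g₁ g₂, ← map_mul] at hst
    have hu : (g₂ * ((g₂⁻¹ * g₁) * (θ (g₂⁻¹ * g₁))⁻¹) * g₂⁻¹)
        * (g₂ * ((g₂⁻¹ * g₁) * (θ (g₂⁻¹ * g₁))⁻¹) * g₂⁻¹) = 1 := by
      apply hι
      rw [hst, map_one]
    have hφ2 : ((g₂⁻¹ * g₁) * (θ (g₂⁻¹ * g₁))⁻¹) * ((g₂⁻¹ * g₁) * (θ (g₂⁻¹ * g₁))⁻¹) = 1 := by
      have h3 : g₂ * (((g₂⁻¹ * g₁) * (θ (g₂⁻¹ * g₁))⁻¹)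
          * ((g₂⁻¹ * g₁) * (θ (g₂⁻¹ * g₁))⁻¹)) * g₂⁻¹ = 1 := by
        rw [← hu]; group
      have h4 := congrArg (fun x => g₂⁻¹ * x * g₂) h3
      simpa [mul_assoc] using h4
    exact (hmemH _).2 hφ2
end

section
/- Assume H = G^θ and let X be a maximal antipodal set in G/H containing the origin o = eH. Define ψ : G/H → Ḡ by ψ(gH) = g θ̄ g⁻¹ (this is well defined and injective), and let G act on G/H by left translation g·(g′H) = gg′H. Then: (i) ψ(X) = C_θ̄ ∩ F₂(X); and (ii) every g ∈ G whose conjugation action on Ḡ stabilizes F₂(X) satisfies g·X = X. Consequently, with N_G(X) = {g ∈ G : g·X = X}, Z_G(X) = {g ∈ G : g·x = x for all x ∈ X}, N_G(F₂(X)) = {g ∈ G : g F₂(X) g⁻¹ = F₂(X)} and Z_G(F₂(X)) = {g ∈ G : g f g⁻¹ = f for all f ∈ F₂(X)}, the natural injective homomorphism W_G(X) = N_G(X)/Z_G(X) → W_G(F₂(X)) = N_G(F₂(X))/Z_G(F₂(X)) is an isomorphism. -/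
namespace Stmt5Aux

variable {G Gb : Type*} [Group G] [Group Gb]

/-- The Cartan quadratic map `φ(g) = g θ(g)⁻¹`. -/
def aphi (θ : G →* G) (g : G) : G := g * (θ g)⁻¹

/-- `ψ(g) = ι(g) θ̄ ι(g)⁻¹`. -/
def apsi (ι : G →* Gb) (θb : Gb) (g : G) : Gb := ι g * θb * (ι g)⁻¹

theorem aphi_theta (θ : G →* G) (hθ : ∀ g, θ (θ g) = g) (g : G) :
    θ (aphi θ g) = (aphi θ g)⁻¹ := by
  simp [aphi, hθ, mul_inv_rev]

theorem apsi_eq (θ : G →* G) (ι : G →* Gb) (θb : Gb)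
    (hconj : ∀ g : G, ι (θ g) = θb * ι g * θb⁻¹) (g : G) :
    apsi ι θb g = ι (aphi θ g) * θb := by
  unfold apsi aphi
  rw [map_mul, map_inv, hconj]
  group

theorem apsi_conj (ι : G →* Gb) (θb : Gb) (g a : G) :
    ι g * apsi ι θb a * (ι g)⁻¹ = apsi ι θb (g * a) := by
  unfold apsi; rw [map_mul]; group

theorem apsi_one (ι : G →* Gb) (θb : Gb) : apsi ι θb 1 = θb := by
  simp [apsi]

theorem aphi_coset {H : Subgroup G} (θ : G →* G) (hH : ∀ g, g ∈ H ↔ θ g = g) (a b : G)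
    (hab : (QuotientGroup.mk a : G ⧸ H) = QuotientGroup.mk b) :
    aphi θ a = aphi θ b := by
  have h : a⁻¹ * b ∈ H := QuotientGroup.eq.1 hab
  have hf : θ (a⁻¹ * b) = a⁻¹ * b := (hH _).1 h
  have hb : θ b = θ a * (a⁻¹ * b) := by
    rw [← hf, ← map_mul]; congr 1; group
  unfold aphi
  rw [hb]
  group

theorem apsi_inj {H : Subgroup G} (θ : G →* G) (hH : ∀ g, g ∈ H ↔ θ g = g)
    (ι : G →* Gb) (hι : Function.Injective ι) (θb : Gb)
    (hconj : ∀ g : G, ι (θ g) = θb * ι g * θb⁻¹) (a b : G)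
    (h : apsi ι θb a = apsi ι θb b) :
    (QuotientGroup.mk a : G ⧸ H) = QuotientGroup.mk b := by
  rw [apsi_eq θ ι θb hconj, apsi_eq θ ι θb hconj] at h
  have h2 : aphi θ a = aphi θ b := hι (mul_right_cancel h)
  unfold aphi at h2
  have h3 : a⁻¹ * b = θ (a⁻¹ * b) := by
    rw [map_mul, map_inv]
    calc a⁻¹ * b = a⁻¹ * (b * (θ b)⁻¹) * θ b := by group
    _ = a⁻¹ * (a * (θ a)⁻¹) * θ b := by rw [← h2]
    _ = (θ a)⁻¹ * θ b := by group
  exact QuotientGroup.eq.2 ((hH _).2 h3.symm)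

theorem apsi_prod (θ : G →* G) (hθ : ∀ g, θ (θ g) = g) (ι : G →* Gb) (θb : Gb)
    (hbb : θb * θb = 1) (hconj : ∀ g : G, ι (θ g) = θb * ι g * θb⁻¹) (a b : G) :
    apsi ι θb a * apsi ι θb b = ι (aphi θ a * (aphi θ b)⁻¹) := by
  have hbinv : θb⁻¹ = θb := by rw [inv_eq_iff_mul_eq_one]; exact hbb
  rw [apsi_eq θ ι θb hconj, apsi_eq θ ι θb hconj, map_mul, map_inv]
  have h1 : (ι (aphi θ b))⁻¹ = θb * ι (aphi θ b) * θb⁻¹ := by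
    rw [← map_inv, ← aphi_theta θ hθ, hconj]
  rw [h1, hbinv]
  group

theorem mem_iff_sq {H : Subgroup G} (θ : G →* G) (hθ : ∀ g, θ (θ g) = g)
    (hH : ∀ g, g ∈ H ↔ θ g = g) (g : G) :
    aphi θ g ∈ H ↔ aphi θ g * aphi θ g = 1 := by
  rw [hH, aphi_theta θ hθ]
  exact inv_eq_iff_mul_eq_one

theorem key {H : Subgroup G} (θ : G →* G) (hθ : ∀ g, θ (θ g) = g)
    (hH : ∀ g, g ∈ H ↔ θ g = g) (ι : G →* Gb) (hι : Function.Injective ι) (θb : Gb)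
    (hbb : θb * θb = 1) (hconj : ∀ g : G, ι (θ g) = θb * ι g * θb⁻¹) (a b : G) :
    ((b⁻¹ * a) * (θ (b⁻¹ * a))⁻¹ ∈ H) ↔
      apsi ι θb a * apsi ι θb b = apsi ι θb b * apsi ι θb a := by
  have h0 : ((b⁻¹ * a) * (θ (b⁻¹ * a))⁻¹ ∈ H) ↔
      aphi θ (b⁻¹ * a) * aphi θ (b⁻¹ * a) = 1 := mem_iff_sq θ hθ hH _
  have h1 : aphi θ (b⁻¹ * a) = b⁻¹ * (aphi θ a * (aphi θ b)⁻¹) * b := by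
    unfold aphi; rw [map_mul, map_inv]; group
  have h2 : aphi θ (b⁻¹ * a) * aphi θ (b⁻¹ * a) = 1 ↔
      (aphi θ a * (aphi θ b)⁻¹) * (aphi θ a * (aphi θ b)⁻¹) = 1 := by
    rw [h1]
    constructor
    · intro h
      have e : (aphi θ a * (aphi θ b)⁻¹) * (aphi θ a * (aphi θ b)⁻¹) =
          b * (b⁻¹ * (aphi θ a * (aphi θ b)⁻¹) * b * (b⁻¹ * (aphi θ a * (aphi θ b)⁻¹) * b)) * b⁻¹ := by
        group
      rw [e, h]; simp
    · intro h
      have e : b⁻¹ * (aphi θ a * (aphi θ b)⁻¹) * b * (b⁻¹ * (aphi θ a * (aphi θ b)⁻¹) * b) =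
          b⁻¹ * ((aphi θ a * (aphi θ b)⁻¹) * (aphi θ a * (aphi θ b)⁻¹)) * b := by
        group
      rw [e, h]; simp
  have h3 : apsi ι θb a * apsi ι θb b = ι (aphi θ a * (aphi θ b)⁻¹) :=
    apsi_prod θ hθ ι θb hbb hconj a b
  have h4 : apsi ι θb b * apsi ι θb a = ι ((aphi θ a * (aphi θ b)⁻¹)⁻¹) := by
    rw [apsi_prod θ hθ ι θb hbb hconj b a, mul_inv_rev, inv_inv]
  rw [h0, h2, h3, h4]
  constructor
  · intro h
    have e : (aphi θ a * (aphi θ b)⁻¹)⁻¹ = aphi θ a * (aphi θ b)⁻¹ :=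
      inv_eq_iff_mul_eq_one.2 h
    rw [e]
  · intro h
    have e := hι h
    nth_rewrite 2 [e]
    group

theorem conj_gen (θ : G →* G) (ι : G →* Gb) (θb : Gb) (hbb : θb * θb = 1)
    (hconj : ∀ g : G, ι (θ g) = θb * ι g * θb⁻¹) (h a : G) :
    ι h * ι (aphi θ a) * (ι h)⁻¹ = apsi ι θb (h * a) * apsi ι θb h := by
  rw [← apsi_conj ι θb h a, apsi_eq θ ι θb hconj a]
  show ι h * ι (aphi θ a) * (ι h)⁻¹ =
      ι h * (ι (aphi θ a) * θb) * (ι h)⁻¹ * (ι h * θb * (ι h)⁻¹)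
  have e : ι h * (ι (aphi θ a) * θb) * (ι h)⁻¹ * (ι h * θb * (ι h)⁻¹) =
      ι h * ι (aphi θ a) * (θb * θb) * (ι h)⁻¹ := by group
  rw [e, hbb, mul_one]

end Stmt5Aux

open Stmt5Aux

/-- for a maximal antipodal set `X` in `G/G^θ` containing the origin, with
`ψ(gH) = g θ̄ g⁻¹`: (i) `ψ(X) = C_θ̄ ∩ F₂(X)`; (ii) every `g ∈ G` whose conjugation action on
`Ḡ` stabilizes `F₂(X)` satisfies `g·X = X`; (iii) the natural injective homomorphism
`W_G(X) = N_G(X)/Z_G(X) → W_G(F₂(X)) = N_G(F₂(X))/Z_G(F₂(X))` is an isomorphism (spelled out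
elementarily: the map is defined on all of `N_G(X)`, its kernel is exactly `Z_G(X)`, and it is
surjective onto `N_G(F₂(X))/Z_G(F₂(X))`). -/
theorem stmt_5 {G Gb : Type*} [Group G] [Group Gb]
    (θ : G →* G) (hθ : ∀ g, θ (θ g) = g)
    (H : Subgroup G) (hH : ∀ g, g ∈ H ↔ θ g = g)
    -- `Gb` together with `ι`, `θb` is the semidirect product `Ḡ = G ⋊ ⟨θ̄⟩`:
    (ι : G →* Gb) (hι : Function.Injective ι)
    (θb : Gb) (hb2 : θb ^ 2 = 1) (hbr : θb ∉ ι.range)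
    (hconj : ∀ g : G, ι (θ g) = θb * ι g * θb⁻¹)
    (hgen : Subgroup.closure (Set.range ⇑ι ∪ {θb}) = (⊤ : Subgroup Gb))
    (X : Set (G ⧸ H)) (hX : (QuotientGroup.mk (1 : G) : G ⧸ H) ∈ X)
    (hmax : MaximalAntipodal (⇑θ) H X) :
    -- (i) ψ(X) = C_θ̄ ∩ F₂(X)
    ({y : Gb | ∃ g : G, (QuotientGroup.mk g : G ⧸ H) ∈ X ∧ y = ι g * θb * (ι g)⁻¹} =
        CartanConjClass ι θb ∩ (F2 (⇑θ) ι θb X : Set Gb)) ∧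
    -- (ii) conjugation-stabilizers of `F₂(X)` stabilize `X`
    (∀ g : G, (fun f => ι g * f * (ι g)⁻¹) '' (F2 (⇑θ) ι θb X : Set Gb) =
        (F2 (⇑θ) ι θb X : Set Gb) → (fun x => g • x) '' X = X) ∧
    -- (iii) `W_G(X) → W_G(F₂(X))` is an isomorphism:
    -- it is well defined on `N_G(X)`,
    ((∀ g : G, (fun x => g • x) '' X = X →
        (fun f => ι g * f * (ι g)⁻¹) '' (F2 (⇑θ) ι θb X : Set Gb) = (F2 (⇑θ) ι θb X : Set Gb)) ∧
      -- injective: an element of `N_G(X)` is in its kernel `Z_G(F₂(X))` iff it lies in `Z_G(X)`,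
      (∀ g : G, (fun x => g • x) '' X = X →
        ((∀ f ∈ F2 (⇑θ) ι θb X, ι g * f = f * ι g) ↔ (∀ x ∈ X, g • x = x))) ∧
      -- and surjective: every element of `N_G(F₂(X))` agrees with one of `N_G(X)` mod `Z_G(F₂(X))`.
      (∀ g : G, (fun f => ι g * f * (ι g)⁻¹) '' (F2 (⇑θ) ι θb X : Set Gb) =
          (F2 (⇑θ) ι θb X : Set Gb) →
        ∃ g' : G, (fun x => g' • x) '' X = X ∧
          ∀ f ∈ F2 (⇑θ) ι θb X, ι (g'⁻¹ * g) * f = f * ι (g'⁻¹ * g))) := by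
  obtain ⟨hant, hmaxi⟩ := hmax
  have hbb : θb * θb = 1 := by rw [← sq]; exact hb2
  -- basic membership facts
  have hphiH : ∀ a : G, (QuotientGroup.mk a : G ⧸ H) ∈ X → aphi θ a ∈ H := by
    intro a ha
    have := hant a 1 ha hX
    simpa [aphi] using this
  have hphiF : ∀ a : G, (QuotientGroup.mk a : G ⧸ H) ∈ X → ι (aphi θ a) ∈ F2 (⇑θ) ι θb X := by
    intro a ha
    exact Subgroup.subset_closure (Or.inl ⟨a, ha, rfl⟩)
  have hθbF : θb ∈ F2 (⇑θ) ι θb X := Subgroup.subset_closure (Or.inr rfl)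
  have hpsiF : ∀ a : G, (QuotientGroup.mk a : G ⧸ H) ∈ X → apsi ι θb a ∈ F2 (⇑θ) ι θb X := by
    intro a ha
    rw [apsi_eq θ ι θb hconj]
    exact Subgroup.mul_mem _ (hphiF a ha) hθbF
  have hphi_inv : ∀ a : G, (QuotientGroup.mk a : G ⧸ H) ∈ X → (aphi θ a)⁻¹ = aphi θ a := by
    intro a ha
    rw [← aphi_theta θ hθ]
    exact (hH _).1 (hphiH a ha)
  -- the generators of `F₂(X)` pairwise commute
  have hcommθb : ∀ a : G, (QuotientGroup.mk a : G ⧸ H) ∈ X →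
      ι (aphi θ a) * θb = θb * ι (aphi θ a) := by
    intro a ha
    have h1 : ι (aphi θ a) = θb * ι (aphi θ a) * θb⁻¹ := by
      rw [← hconj, (hH _).1 (hphiH a ha)]
    conv_lhs => rw [h1]
    group
  have hcommφ : ∀ a b : G, (QuotientGroup.mk a : G ⧸ H) ∈ X →
      (QuotientGroup.mk b : G ⧸ H) ∈ X →
      ι (aphi θ a) * ι (aphi θ b) = ι (aphi θ b) * ι (aphi θ a) := by
    intro a b ha hb
    have h1 : ι (aphi θ a * (aphi θ b)⁻¹) = ι (aphi θ b * (aphi θ a)⁻¹) := by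
      rw [← apsi_prod θ hθ ι θb hbb hconj, ← apsi_prod θ hθ ι θb hbb hconj,
        (key θ hθ hH ι hι θb hbb hconj a b).1 (hant a b ha hb)]
    have h2 := hι h1
    rw [hphi_inv a ha, hphi_inv b hb] at h2
    rw [← map_mul, ← map_mul, h2]
  have hScomm : ∀ s ∈ ({y : Gb | ∃ g : G, (QuotientGroup.mk g : G ⧸ H) ∈ X ∧
        y = ι (g * (θ g)⁻¹)} ∪ {θb} : Set Gb),
      ∀ t ∈ ({y : Gb | ∃ g : G, (QuotientGroup.mk g : G ⧸ H) ∈ X ∧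
        y = ι (g * (θ g)⁻¹)} ∪ {θb} : Set Gb), s * t = t * s := by
    rintro s (⟨a, ha, rfl⟩ | rfl)
    · rintro t (⟨b, hb, rfl⟩ | rfl)
      · exact hcommφ a b ha hb
      · exact hcommθb a ha
    · rintro t (⟨b, hb, rfl⟩ | rfl)
      · exact (hcommθb b hb).symm
      · rfl
  -- `F₂(X)` is abelian
  have hc1 : ∀ s ∈ ({y : Gb | ∃ g : G, (QuotientGroup.mk g : G ⧸ H) ∈ X ∧
        y = ι (g * (θ g)⁻¹)} ∪ {θb} : Set Gb),
      ∀ x ∈ F2 (⇑θ) ι θb X, s * x = x * s := by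
    intro s hs x hx
    have hle : F2 (⇑θ) ι θb X ≤ Subgroup.centralizer {s} := by
      apply (Subgroup.closure_le _).2
      intro t ht
      exact Subgroup.mem_centralizer_iff.2
        (fun y hy => by rw [Set.eq_of_mem_singleton hy]; exact hScomm s hs t ht)
    exact (Subgroup.mem_centralizer_iff.1 (hle hx)) s (Set.mem_singleton _)
  have habel : ∀ x ∈ F2 (⇑θ) ι θb X, ∀ y ∈ F2 (⇑θ) ι θb X, x * y = y * x := by
    intro x hx y hy
    have hle2 : F2 (⇑θ) ι θb X ≤ Subgroup.centralizer {x} := by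
      apply (Subgroup.closure_le _).2
      intro t ht
      exact Subgroup.mem_centralizer_iff.2
        (fun y' hy' => by rw [Set.eq_of_mem_singleton hy']; exact (hc1 t ht x hx).symm)
    exact Subgroup.mem_centralizer_iff.1 (hle2 hy) x (Set.mem_singleton _)
  -- part (i)
  have hpart1 : ({y : Gb | ∃ g : G, (QuotientGroup.mk g : G ⧸ H) ∈ X ∧
      y = ι g * θb * (ι g)⁻¹} =
      CartanConjClass ι θb ∩ (F2 (⇑θ) ι θb X : Set Gb)) := by
    ext y
    constructor
    · rintro ⟨g, hg, rfl⟩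
      exact ⟨⟨g, rfl⟩, hpsiF g hg⟩
    · rintro ⟨⟨g, rfl⟩, hy⟩
      have hyF : apsi ι θb g ∈ F2 (⇑θ) ι θb X := hy
      have hY : IsAntipodal (⇑θ) H (X ∪ {QuotientGroup.mk g}) := by
        intro a b ha hb
        have hpa : apsi ι θb a ∈ F2 (⇑θ) ι θb X := by
          rcases ha with ha | ha
          · exact hpsiF a ha
          · have hag : aphi θ a = aphi θ g := aphi_coset θ hH a g ha
            rw [apsi_eq θ ι θb hconj, hag, ← apsi_eq θ ι θb hconj]
            exact hyF
        have hpb : apsi ι θb b ∈ F2 (⇑θ) ι θb X := by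
          rcases hb with hb | hb
          · exact hpsiF b hb
          · have hbg : aphi θ b = aphi θ g := aphi_coset θ hH b g hb
            rw [apsi_eq θ ι θb hconj, hbg, ← apsi_eq θ ι θb hconj]
            exact hyF
        exact (key θ hθ hH ι hι θb hbb hconj a b).2 (habel _ hpa _ hpb)
      have hYX := hmaxi _ hY Set.subset_union_left
      have hgX : (QuotientGroup.mk g : G ⧸ H) ∈ X := by
        rw [← hYX]; exact Or.inr rfl
      exact ⟨g, hgX, rfl⟩
  -- conjugation-stability helpers
  have hfwd : ∀ g : G, ((fun f => ι g * f * (ι g)⁻¹) '' (F2 (⇑θ) ι θb X : Set Gb) =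
      (F2 (⇑θ) ι θb X : Set Gb)) →
      ∀ f ∈ F2 (⇑θ) ι θb X, ι g * f * (ι g)⁻¹ ∈ F2 (⇑θ) ι θb X := by
    intro g hg f hf
    have h1 : ι g * f * (ι g)⁻¹ ∈ (fun f => ι g * f * (ι g)⁻¹) '' (F2 (⇑θ) ι θb X : Set Gb) :=
      ⟨f, hf, rfl⟩
    rwa [hg] at h1
  have hbwd : ∀ g : G, ((fun f => ι g * f * (ι g)⁻¹) '' (F2 (⇑θ) ι θb X : Set Gb) =
      (F2 (⇑θ) ι θb X : Set Gb)) →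
      ∀ f ∈ F2 (⇑θ) ι θb X, ι g⁻¹ * f * (ι g⁻¹)⁻¹ ∈ F2 (⇑θ) ι θb X := by
    intro g hg f hf
    have hfc : f ∈ (F2 (⇑θ) ι θb X : Set Gb) := hf
    rw [← hg] at hfc
    obtain ⟨x, hx, hxe⟩ := hfc
    have e : ι g⁻¹ * (ι g * x * (ι g)⁻¹) * (ι g⁻¹)⁻¹ = x := by
      rw [map_inv]; group
    rw [← hxe]
    show ι g⁻¹ * (ι g * x * (ι g)⁻¹) * (ι g⁻¹)⁻¹ ∈ F2 (⇑θ) ι θb X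
    rw [e]
    exact hx
  have himg : ∀ g : G, (∀ f ∈ F2 (⇑θ) ι θb X, ι g * f * (ι g)⁻¹ ∈ F2 (⇑θ) ι θb X) →
      (∀ f ∈ F2 (⇑θ) ι θb X, ι g⁻¹ * f * (ι g⁻¹)⁻¹ ∈ F2 (⇑θ) ι θb X) →
      (fun f => ι g * f * (ι g)⁻¹) '' (F2 (⇑θ) ι θb X : Set Gb) = (F2 (⇑θ) ι θb X : Set Gb) := by
    intro g h1 h2
    ext f
    constructor
    · rintro ⟨x, hx, rfl⟩
      exact h1 x hx
    · intro hf
      refine ⟨ι g⁻¹ * f * (ι g⁻¹)⁻¹, h2 f hf, ?_⟩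
      show ι g * (ι g⁻¹ * f * (ι g⁻¹)⁻¹) * (ι g)⁻¹ = f
      rw [map_inv]; group
  have hinvF : ∀ g : G, ((fun f => ι g * f * (ι g)⁻¹) '' (F2 (⇑θ) ι θb X : Set Gb) =
      (F2 (⇑θ) ι θb X : Set Gb)) →
      ((fun f => ι g⁻¹ * f * (ι g⁻¹)⁻¹) '' (F2 (⇑θ) ι θb X : Set Gb) =
      (F2 (⇑θ) ι θb X : Set Gb)) := by
    intro g hg
    refine himg g⁻¹ (hbwd g hg) ?_
    intro f hf
    rw [inv_inv]
    exact hfwd g hg f hf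
  -- translating `X` by conjugation-stabilizers
  have hstabX : ∀ g : G, ((fun f => ι g * f * (ι g)⁻¹) '' (F2 (⇑θ) ι θb X : Set Gb) =
      (F2 (⇑θ) ι θb X : Set Gb)) →
      ∀ a : G, (QuotientGroup.mk a : G ⧸ H) ∈ X → (QuotientGroup.mk (g * a) : G ⧸ H) ∈ X := by
    intro g hg a ha
    have h1 : apsi ι θb (g * a) ∈ (F2 (⇑θ) ι θb X : Set Gb) := by
      rw [← hg]
      exact ⟨apsi ι θb a, hpsiF a ha, apsi_conj ι θb g a⟩
    have h2 : apsi ι θb (g * a) ∈ {y : Gb | ∃ g' : G,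
        (QuotientGroup.mk g' : G ⧸ H) ∈ X ∧ y = ι g' * θb * (ι g')⁻¹} := by
      rw [hpart1]
      exact ⟨⟨g * a, rfl⟩, h1⟩
    obtain ⟨b, hb, hab⟩ := h2
    have h3 := apsi_inj θ hH ι hι θb hconj (g * a) b hab
    rw [h3]
    exact hb
  -- part (ii)
  have hii : ∀ g : G, (fun f => ι g * f * (ι g)⁻¹) '' (F2 (⇑θ) ι θb X : Set Gb) =
      (F2 (⇑θ) ι θb X : Set Gb) → (fun x => g • x) '' X = X := by
    intro g hg
    ext x
    constructor
    · rintro ⟨x', hx', rfl⟩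
      obtain ⟨a, rfl⟩ := QuotientGroup.mk_surjective x'
      exact hstabX g hg a hx'
    · intro hx
      obtain ⟨a, rfl⟩ := QuotientGroup.mk_surjective x
      refine ⟨QuotientGroup.mk (g⁻¹ * a), hstabX g⁻¹ (hinvF g hg) a hx, ?_⟩
      show (QuotientGroup.mk (g * (g⁻¹ * a)) : G ⧸ H) = QuotientGroup.mk a
      rw [mul_inv_cancel_left]
  -- part (iii).1
  have hiii1 : ∀ g : G, (fun x => g • x) '' X = X →
      (fun f => ι g * f * (ι g)⁻¹) '' (F2 (⇑θ) ι θb X : Set Gb) = (F2 (⇑θ) ι θb X : Set Gb) := by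
    intro g hgX
    have hXg : ∀ a : G, (QuotientGroup.mk a : G ⧸ H) ∈ X →
        (QuotientGroup.mk (g * a) : G ⧸ H) ∈ X := by
      intro a ha
      have h1 : g • (QuotientGroup.mk a : G ⧸ H) ∈ (fun x => g • x) '' X := ⟨_, ha, rfl⟩
      rw [hgX] at h1
      exact h1
    have hXg' : ∀ a : G, (QuotientGroup.mk a : G ⧸ H) ∈ X →
        (QuotientGroup.mk (g⁻¹ * a) : G ⧸ H) ∈ X := by
      intro a ha
      have h1 : (QuotientGroup.mk a : G ⧸ H) ∈ (fun x => g • x) '' X := by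
        rw [hgX]; exact ha
      obtain ⟨z, hz, hze⟩ := h1
      have h2 : z = QuotientGroup.mk (g⁻¹ * a) := by
        calc z = g⁻¹ • (g • z) := (inv_smul_smul g z).symm
        _ = g⁻¹ • (QuotientGroup.mk a : G ⧸ H) := by rw [← hze]
      rw [h2] at hz
      exact hz
    have hsub : ∀ h : G, (∀ a : G, (QuotientGroup.mk a : G ⧸ H) ∈ X →
        (QuotientGroup.mk (h * a) : G ⧸ H) ∈ X) →
        ∀ f ∈ F2 (⇑θ) ι θb X, ι h * f * (ι h)⁻¹ ∈ F2 (⇑θ) ι θb X := by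
      intro h hh f hf
      have hhX : (QuotientGroup.mk h : G ⧸ H) ∈ X := by
        have := hh 1 hX; rwa [mul_one] at this
      have hle : F2 (⇑θ) ι θb X ≤
          Subgroup.comap ((MulAut.conj (ι h)).toMonoidHom) (F2 (⇑θ) ι θb X) := by
        apply (Subgroup.closure_le _).2
        rintro s (⟨a, ha, rfl⟩ | hs)
        · show ι h * ι (aphi θ a) * (ι h)⁻¹ ∈ F2 (⇑θ) ι θb X
          rw [conj_gen θ ι θb hbb hconj h a]
          exact Subgroup.mul_mem _ (hpsiF _ (hh a ha)) (hpsiF _ hhX)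
        · rw [Set.eq_of_mem_singleton hs]
          show ι h * θb * (ι h)⁻¹ ∈ F2 (⇑θ) ι θb X
          exact hpsiF h hhX
      have h1 := hle hf
      rw [Subgroup.mem_comap] at h1
      have e : (MulAut.conj (ι h)).toMonoidHom f = ι h * f * (ι h)⁻¹ := rfl
      rwa [e] at h1
    exact himg g (hsub g hXg) (hsub g⁻¹ hXg')
  -- part (iii).2
  have hiii2 : ∀ g : G, (fun x => g • x) '' X = X →
      ((∀ f ∈ F2 (⇑θ) ι θb X, ι g * f = f * ι g) ↔ (∀ x ∈ X, g • x = x)) := by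
    intro g hgX
    constructor
    · intro hcent x hx
      obtain ⟨a, rfl⟩ := QuotientGroup.mk_surjective x
      have hc := hcent _ (hpsiF a hx)
      have h1 : apsi ι θb (g * a) = apsi ι θb a := by
        rw [← apsi_conj ι θb g a, hc, mul_inv_cancel_right]
      exact apsi_inj θ hH ι hι θb hconj (g * a) a h1
    · intro hfix f hf
      have hgo : (QuotientGroup.mk g : G ⧸ H) = QuotientGroup.mk 1 := by
        have h' : (QuotientGroup.mk (g * 1) : G ⧸ H) = QuotientGroup.mk 1 := hfix _ hX
        rwa [mul_one] at h'
      have hcθ : ι g * θb = θb * ι g := by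
        have h1 : apsi ι θb g = apsi ι θb 1 := by
          rw [apsi_eq θ ι θb hconj, apsi_eq θ ι θb hconj, aphi_coset θ hH g 1 hgo]
        rw [apsi_one] at h1
        have h2 : ι g * θb * (ι g)⁻¹ = θb := h1
        calc ι g * θb = ι g * θb * (ι g)⁻¹ * ι g := by group
        _ = θb * ι g := by rw [h2]
      have hcψ : ∀ a : G, (QuotientGroup.mk a : G ⧸ H) ∈ X →
          ι g * apsi ι θb a = apsi ι θb a * ι g := by
        intro a ha
        have h' : (QuotientGroup.mk (g * a) : G ⧸ H) = QuotientGroup.mk a := hfix _ ha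
        have h1 : apsi ι θb (g * a) = apsi ι θb a := by
          rw [apsi_eq θ ι θb hconj, apsi_eq θ ι θb hconj, aphi_coset θ hH (g * a) a h']
        rw [← apsi_conj ι θb g a] at h1
        calc ι g * apsi ι θb a = ι g * apsi ι θb a * (ι g)⁻¹ * ι g := by group
        _ = apsi ι θb a * ι g := by rw [h1]
      have hle : F2 (⇑θ) ι θb X ≤ Subgroup.centralizer {ι g} := by
        apply (Subgroup.closure_le _).2
        rintro s (⟨a, ha, rfl⟩ | rfl)
        · refine Subgroup.mem_centralizer_iff.2 (fun y hy => ?_)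
          rw [Set.eq_of_mem_singleton hy]
          show ι g * ι (aphi θ a) = ι (aphi θ a) * ι g
          have e : ι (aphi θ a) = apsi ι θb a * θb := by
            rw [apsi_eq θ ι θb hconj a, mul_assoc, hbb, mul_one]
          rw [e, ← mul_assoc, hcψ a ha, mul_assoc, hcθ, ← mul_assoc]
        · refine Subgroup.mem_centralizer_iff.2 (fun y hy => ?_)
          rw [Set.eq_of_mem_singleton hy]
          exact hcθ
      exact Subgroup.mem_centralizer_iff.1 (hle hf) (ι g) (Set.mem_singleton _)
  refine ⟨hpart1, hii, hiii1, hiii2, ?_⟩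
  intro g hg
  refine ⟨g, hii g hg, fun f hf => ?_⟩
  simp
end

section
/- Let G be a group, t ∈ G with t² = e, θ the inner automorphism g ↦ t g t⁻¹, and H = G^θ = Z_G(t) the centralizer of t. Let X be a maximal antipodal set in G/H containing the origin o = eH, and set F(X) = ⟨{g t g⁻¹ : gH ∈ X}⟩ ≤ G (well defined since elements of H commute with t; note t ∈ F(X)). Then F(X) is a maximal element, under inclusion, of the set of elementary abelian 2-subgroups of G that contain t and are generated by conjugates of t, and X = {gH ∈ G/H : g t g⁻¹ ∈ F(X)}. (This is the inner-automorphism case of the paper's theorem on adjoint-type symmetric spaces.) -/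
/-!
Write `θ g = t g t⁻¹` and `H = Z_G(t)`. For `u = g₂⁻¹ g₁` the Cartan element `u θ(u)⁻¹ = u t u⁻¹ t⁻¹`
commutes with `t` exactly when `u t u⁻¹` does, i.e. (conjugating by `g₂`) when `g₁ t g₁⁻¹` and
`g₂ t g₂⁻¹` commute. So `X` is antipodal iff the conjugates `g t g⁻¹`, `gH ∈ X`, commute pairwise;
being involutions, they generate an elementary abelian 2-group `F(X)`. Conversely, for any
elementary abelian 2-subgroup `F'` the set `{gH : g t g⁻¹ ∈ F'}` is antipodal; if `F(X) ≤ F'` it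
contains `X`, hence equals `X` by maximality. This gives `X = {gH : g t g⁻¹ ∈ F(X)}`, and every
conjugate of `t` in such an `F'` already lies in `F(X)`, which gives maximality of `F(X)`.
-/

open Subgroup QuotientGroup

section ElementaryAbelian

variable {G : Type*} [Group G]

theorem Subgroup.commute_of_forall_sq_eq_one {F : Subgroup G} (hF : ∀ a ∈ F, a ^ 2 = 1)
    {a b : G} (ha : a ∈ F) (hb : b ∈ F) : Commute a b :=
  congrArg Subtype.val <| Commute.of_orderOf_dvd_two (G := F)
    (fun g => orderOf_dvd_of_pow_eq_one (Subtype.ext (hF g g.2))) ⟨a, ha⟩ ⟨b, hb⟩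

theorem Subgroup.sq_eq_one_of_mem_closure {S : Set G}
    (hcomm : ∀ x ∈ S, ∀ y ∈ S, x * y = y * x) (hsq : ∀ x ∈ S, x ^ 2 = 1)
    {a : G} (ha : a ∈ closure S) : a ^ 2 = 1 := by
  have := isMulCommutative_closure hcomm
  induction ha using closure_induction with
  | mem x hx => exact hsq x hx
  | one => exact one_pow 2
  | mul x y hx hy ihx ihy =>
    have hxy : Commute x y := setLike_mul_comm hx hy
    rw [hxy.mul_pow, ihx, ihy, one_mul]
  | inv x _ ihx => rw [inv_pow, ihx, inv_one]

end ElementaryAbelian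

section InnerInvolution

variable {G : Type*} [Group G] (t : G)

theorem conj_eq_of_mk_eq_mk {g₁ g₂ : G} (h : (g₁ : G ⧸ centralizer {t}) = g₂) :
    g₁ * t * g₁⁻¹ = g₂ * t * g₂⁻¹ := by
  have hcomm : t * (g₁⁻¹ * g₂) = (g₁⁻¹ * g₂) * t :=
    mem_centralizer_iff.mp (QuotientGroup.eq.mp h) t rfl
  calc g₁ * t * g₁⁻¹ = g₁ * (t * (g₁⁻¹ * g₂)) * g₂⁻¹ := by group
    _ = g₁ * ((g₁⁻¹ * g₂) * t) * g₂⁻¹ := by rw [hcomm]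
    _ = g₂ * t * g₂⁻¹ := by group

theorem cartan_mem_centralizer_iff_commute (g₁ g₂ : G) :
    (g₂⁻¹ * g₁) * (t * (g₂⁻¹ * g₁) * t⁻¹)⁻¹ ∈ centralizer {t} ↔
      Commute (g₁ * t * g₁⁻¹) (g₂ * t * g₂⁻¹) := by
  set u := g₂⁻¹ * g₁
  have hcartan : u * (t * u * t⁻¹)⁻¹ = (u * t * u⁻¹) * t⁻¹ := by group
  have hconj : g₂ * (u * t * u⁻¹) * g₂⁻¹ = g₁ * t * g₁⁻¹ := by simp only [u]; group
  calc u * (t * u * t⁻¹)⁻¹ ∈ centralizer {t}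
      ↔ Commute t ((u * t * u⁻¹) * t⁻¹) := by
        rw [hcartan, mem_centralizer_singleton_iff]; exact ⟨Eq.symm, Eq.symm⟩
    _ ↔ Commute t (u * t * u⁻¹) :=
        ⟨fun h => by simpa using h.mul_right (Commute.refl t),
          fun h => h.mul_right (Commute.refl t).inv_right⟩
    _ ↔ Commute (g₁ * t * g₁⁻¹) (g₂ * t * g₂⁻¹) := by
        rw [← Commute.conj_iff g₂, hconj, Commute.symm_iff]

theorem isAntipodal_inner_iff (X : Set (G ⧸ centralizer {t})) :
    IsAntipodal (fun g => t * g * t⁻¹) (centralizer {t}) X ↔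
      ∀ g₁ g₂ : G, (g₁ : G ⧸ centralizer {t}) ∈ X → (g₂ : G ⧸ centralizer {t}) ∈ X →
        Commute (g₁ * t * g₁⁻¹) (g₂ * t * g₂⁻¹) := by
  simp only [IsAntipodal, cartan_mem_centralizer_iff_commute]

/-- The paper's `{gH ∈ G/H : g t g⁻¹ ∈ F}`. -/
def conjPreimage (F : Subgroup G) : Set (G ⧸ centralizer {t}) :=
  {x | ∃ g : G, (g : G ⧸ centralizer {t}) = x ∧ g * t * g⁻¹ ∈ F}

variable {t}

theorem mk_mem_conjPreimage {F : Subgroup G} {g : G} :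
    (g : G ⧸ centralizer {t}) ∈ conjPreimage t F ↔ g * t * g⁻¹ ∈ F :=
  ⟨fun ⟨_, hg', hF⟩ => conj_eq_of_mk_eq_mk t hg' ▸ hF, fun h => ⟨g, rfl, h⟩⟩

theorem isAntipodal_conjPreimage {F : Subgroup G} (hF : ∀ a ∈ F, a ^ 2 = 1) :
    IsAntipodal (fun g => t * g * t⁻¹) (centralizer {t}) (conjPreimage t F) :=
  (isAntipodal_inner_iff t _).mpr fun _ _ h₁ h₂ =>
    commute_of_forall_sq_eq_one hF (mk_mem_conjPreimage.mp h₁) (mk_mem_conjPreimage.mp h₂)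

theorem MaximalAntipodal.conjPreimage_eq {X : Set (G ⧸ centralizer {t})}
    (hmax : MaximalAntipodal (fun g => t * g * t⁻¹) (centralizer {t}) X)
    {F : Subgroup G} (hF : ∀ a ∈ F, a ^ 2 = 1)
    (hXF : ∀ g : G, (g : G ⧸ centralizer {t}) ∈ X → g * t * g⁻¹ ∈ F) :
    conjPreimage t F = X :=
  hmax.2 _ (isAntipodal_conjPreimage hF) fun x hx => by
    obtain ⟨g, rfl⟩ := mk_surjective x
    exact mk_mem_conjPreimage.mpr (hXF g hx)

end InnerInvolution

/-- for `θ` the inner involution `g ↦ tgt⁻¹` (`t² = 1`), `H = Z_G(t)`, and a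
maximal antipodal set `X ∋ o` in `G/H`, the group `F(X) = ⟨{gtg⁻¹ : gH ∈ X}⟩` is a maximal
element of the set of elementary abelian 2-subgroups of `G` containing `t` and generated by
conjugates of `t`, and `X = {gH : gtg⁻¹ ∈ F(X)}`. -/
theorem stmt_6 {G : Type*} [Group G] (t : G) (ht : t ^ 2 = 1)
    (H : Subgroup G) (hH : H = Subgroup.centralizer {t})
    (X : Set (G ⧸ H)) (hX : (QuotientGroup.mk (1 : G) : G ⧸ H) ∈ X)
    (hmax : MaximalAntipodal (fun g => t * g * t⁻¹) H X)
    (F : Subgroup G)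
    (hF : F = Subgroup.closure
      {y : G | ∃ g : G, (QuotientGroup.mk g : G ⧸ H) ∈ X ∧ y = g * t * g⁻¹}) :
    ((∀ a ∈ F, a ^ 2 = 1) ∧ t ∈ F ∧
        (∃ S ⊆ {y : G | ∃ g : G, y = g * t * g⁻¹}, Subgroup.closure S = F) ∧
        ∀ F' : Subgroup G,
          ((∀ a ∈ F', a ^ 2 = 1) ∧ t ∈ F' ∧
            ∃ S ⊆ {y : G | ∃ g : G, y = g * t * g⁻¹}, Subgroup.closure S = F') →
          F ≤ F' → F' = F) ∧
      X = {x : G ⧸ H | ∃ g : G, (QuotientGroup.mk g : G ⧸ H) = x ∧ g * t * g⁻¹ ∈ F} := by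
  subst hH hF
  set S := {y : G | ∃ g : G, (g : G ⧸ centralizer {t}) ∈ X ∧ y = g * t * g⁻¹}
  have hS_comm : ∀ x ∈ S, ∀ y ∈ S, x * y = y * x := by
    rintro _ ⟨g₁, hg₁, rfl⟩ _ ⟨g₂, hg₂, rfl⟩
    exact (isAntipodal_inner_iff t X).mp hmax.1 g₁ g₂ hg₁ hg₂
  have hS_sq : ∀ x ∈ S, x ^ 2 = 1 := by
    rintro _ ⟨g, -, rfl⟩
    rw [conj_pow, ht, mul_one, mul_inv_cancel]
  have hF_sq : ∀ a ∈ closure S, a ^ 2 = 1 := fun _ => sq_eq_one_of_mem_closure hS_comm hS_sq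
  have hX_eq : ∀ F' : Subgroup G, (∀ a ∈ F', a ^ 2 = 1) → closure S ≤ F' →
      conjPreimage t F' = X := fun F' hF'_sq hle =>
    hmax.conjPreimage_eq hF'_sq fun g hg => hle (subset_closure ⟨g, hg, rfl⟩)
  refine ⟨⟨hF_sq, subset_closure ⟨1, hX, by group⟩,
    ⟨S, fun _ ⟨g, _, e⟩ => ⟨g, e⟩, rfl⟩, ?_⟩, (hX_eq _ hF_sq le_rfl).symm⟩
  rintro F' ⟨hF'_sq, -, S', hS'_conj, rfl⟩ hle
  refine le_antisymm ((closure_le _).mpr fun s hs => ?_) hle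
  obtain ⟨g, rfl⟩ := hS'_conj hs
  have hg : (g : G ⧸ centralizer {t}) ∈ X :=
    hX_eq _ hF'_sq hle ▸ mk_mem_conjPreimage.mpr (subset_closure hs)
  exact subset_closure ⟨g, hg, rfl⟩
end

section
/- Let G be a group and let X ⊆ G be a subset containing the identity e. Then X is a maximal antipodal set of G (i.e., X satisfies (x y⁻¹)² = e for all x, y ∈ X and is not properly contained in any other subset with that property) if and only if X is the underlying set of a maximal elementary abelian 2-subgroup of G. -/
section aux

variable {G : Type*} [Group G]

lemma anti_sq {Y : Set G} (h1 : (1:G) ∈ Y)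
    (hA : ∀ x ∈ Y, ∀ y ∈ Y, (x * y⁻¹) ^ 2 = 1) : ∀ x ∈ Y, x ^ 2 = 1 := by
  intro x hx
  have := hA x hx 1 h1
  simpa using this

lemma anti_comm {Y : Set G} (h1 : (1:G) ∈ Y)
    (hA : ∀ x ∈ Y, ∀ y ∈ Y, (x * y⁻¹) ^ 2 = 1) :
    ∀ x ∈ Y, ∀ y ∈ Y, Commute x y := by
  intro x hx y hy
  have hx2 : x ^ 2 = 1 := anti_sq h1 hA x hx
  have hy2 : y ^ 2 = 1 := anti_sq h1 hA y hy
  have hyi : y⁻¹ = y := by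
    rw [inv_eq_iff_mul_eq_one, ← sq, hy2]
  have hxy : (x * y) ^ 2 = 1 := by
    have := hA x hx y hy
    rwa [hyi] at this
  have : x * y = (x * y)⁻¹ := by
    apply eq_inv_of_mul_eq_one_left
    rw [← sq]; exact hxy
  have hxi : x⁻¹ = x := by
    rw [inv_eq_iff_mul_eq_one, ← sq, hx2]
  rw [mul_inv_rev, hxi, hyi] at this
  exact this

lemma closure_comm {S : Set G} (h : ∀ x ∈ S, ∀ y ∈ S, Commute x y) :
    ∀ a ∈ Subgroup.closure S, ∀ b ∈ Subgroup.closure S, Commute a b := by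
  intro a ha
  induction ha using Subgroup.closure_induction with
  | mem x hx =>
      intro b hb
      induction hb using Subgroup.closure_induction with
      | mem y hy => exact h x hx y hy
      | one => exact Commute.one_right x
      | mul _ _ _ _ h1 h2 => exact h1.mul_right h2
      | inv _ _ h1 => exact h1.inv_right
  | one => intro b _; exact Commute.one_left b
  | mul _ _ _ _ h1 h2 => intro b hb; exact (h1 b hb).mul_left (h2 b hb)
  | inv _ _ h1 => intro b hb; exact (h1 b hb).inv_left

lemma closure_sq {S : Set G} (hc : ∀ x ∈ S, ∀ y ∈ S, Commute x y)
    (hs : ∀ x ∈ S, x ^ 2 = 1) :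
    ∀ a ∈ Subgroup.closure S, a ^ 2 = 1 := by
  intro a ha
  induction ha using Subgroup.closure_induction with
  | mem x hx => exact hs x hx
  | one => simp
  | mul x y hx hy h1 h2 =>
      have : Commute x y := closure_comm hc x hx y hy
      rw [this.mul_pow, h1, h2, one_mul]
  | inv x _ h1 => rw [inv_pow, h1, inv_one]

lemma sq_anti {K : Subgroup G} (h : ∀ a ∈ K, a ^ 2 = 1) :
    ∀ x ∈ (K : Set G), ∀ y ∈ (K : Set G), (x * y⁻¹) ^ 2 = 1 := by
  intro x hx y hy
  exact h _ (mul_mem hx (inv_mem hy))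

end aux

/-- a subset `X` of a group `G` containing the identity is a maximal antipodal
set of `G` (for the symmetric-space structure `s_x(y) = xy⁻¹x`, i.e. `(xy⁻¹)² = 1` for all
`x, y ∈ X`, maximal with this property) iff `X` is the underlying set of a maximal elementary
abelian 2-subgroup of `G`. -/
theorem stmt_8 {G : Type*} [Group G] (X : Set G) (hX : (1 : G) ∈ X) :
    ((∀ x ∈ X, ∀ y ∈ X, (x * y⁻¹) ^ 2 = 1) ∧
        ∀ Y : Set G, (∀ x ∈ Y, ∀ y ∈ Y, (x * y⁻¹) ^ 2 = 1) → X ⊆ Y → Y = X) ↔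
      ∃ K : Subgroup G, (∀ a ∈ K, a ^ 2 = 1) ∧
        (∀ K' : Subgroup G, (∀ a ∈ K', a ^ 2 = 1) → K ≤ K' → K' = K) ∧
        X = (K : Set G) := by
  constructor
  · rintro ⟨hA, hmax⟩
    refine ⟨Subgroup.closure X, ?_, ?_, ?_⟩
    · exact closure_sq (anti_comm hX hA) (anti_sq hX hA)
    · intro K' hK' hle
      have hXK' : X ⊆ (K' : Set G) := (Subgroup.subset_closure).trans hle
      have hset := hmax (K' : Set G) (sq_anti hK') hXK'
      exact le_antisymm (fun a ha => Subgroup.subset_closure (by rw [← hset]; exact ha)) hle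
    · have hsq := closure_sq (anti_comm hX hA) (anti_sq hX hA)
      exact (hmax _ (sq_anti hsq) Subgroup.subset_closure).symm
  · rintro ⟨K, hK, hKmax, rfl⟩
    refine ⟨sq_anti hK, ?_⟩
    intro Y hY hXY
    have h1Y : (1:G) ∈ Y := hXY hX
    have hYsq := closure_sq (anti_comm h1Y hY) (anti_sq h1Y hY)
    have hle : K ≤ Subgroup.closure Y := by
      rw [← Subgroup.closure_eq K]
      exact Subgroup.closure_mono hXY
    have heq := hKmax _ hYsq hle
    apply Set.Subset.antisymm _ hXY
    intro y hy
    have : y ∈ Subgroup.closure Y := Subgroup.subset_closure hy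
    rw [heq] at this
    exact this
end

section
/- Assume H = G^θ and let Fix(s_o) = {gH ∈ G/H : θ(g)H = gH} be the fixed-point set of the geodesic symmetry at the origin, on which H acts by left translation h·(gH) = hgH. Then the assignment gH ↦ (g θ̄ g⁻¹, θ̄) induces a bijection between the set of H-orbits in Fix(s_o) and the set of orbits of G, acting by simultaneous conjugation, on the set of ordered pairs (θ₁, θ₂) ∈ C_θ̄ × C_θ̄ with θ₁θ₂ = θ₂θ₁. -/
/-- assuming `H = G^θ`, the assignment `gH ↦ (g θ̄ g⁻¹, θ̄)` induces a bijection
between the set of `H`-orbits in the fixed point set of the geodesic symmetry at the origin,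
and the set of `G`-orbits (under simultaneous conjugation) of ordered pairs of commuting
elements of `C_θ̄`. -/
theorem stmt_10 {G Gb : Type*} [Group G] [Group Gb]
    (θ : G →* G) (hθ : ∀ g, θ (θ g) = g)
    (H : Subgroup G) (hH : ∀ g, g ∈ H ↔ θ g = g)
    -- `Gb` together with `ι`, `θb` is the semidirect product `Ḡ = G ⋊ ⟨θ̄⟩`:
    (ι : G →* Gb) (hι : Function.Injective ι)
    (θb : Gb) (hb2 : θb ^ 2 = 1) (hbr : θb ∉ ι.range)
    (hconj : ∀ g : G, ι (θ g) = θb * ι g * θb⁻¹)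
    (hgen : Subgroup.closure (Set.range ⇑ι ∪ {θb}) = (⊤ : Subgroup Gb))
    -- the fixed point set of the geodesic symmetry `s_o` at the origin:
    (Fix : Set (G ⧸ H))
    (hFix : Fix = {x : G ⧸ H | ∃ g : G,
      (QuotientGroup.mk g : G ⧸ H) = x ∧ (QuotientGroup.mk (θ g) : G ⧸ H) = x})
    -- the set of ordered pairs of commuting elements of `C_θ̄`:
    (Pairs : Set (Gb × Gb))
    (hPairs : Pairs = {p : Gb × Gb | p.1 ∈ CartanConjClass ι θb ∧
      p.2 ∈ CartanConjClass ι θb ∧ p.1 * p.2 = p.2 * p.1})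
    -- the `H`-orbit relation on `Fix` (by left translation):
    (r₁ : {x : G ⧸ H // x ∈ Fix} → {x : G ⧸ H // x ∈ Fix} → Prop)
    (hr₁ : ∀ a b, r₁ a b ↔ ∃ h ∈ H, h • a.1 = b.1)
    -- the `G`-orbit relation on `Pairs` (by simultaneous conjugation):
    (r₂ : {p : Gb × Gb // p ∈ Pairs} → {p : Gb × Gb // p ∈ Pairs} → Prop)
    (hr₂ : ∀ a b, r₂ a b ↔ ∃ g : G,
      ι g * a.1.1 * (ι g)⁻¹ = b.1.1 ∧ ι g * a.1.2 * (ι g)⁻¹ = b.1.2) :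
    ∃ e : Quot r₁ ≃ Quot r₂,
      ∀ (g : G) (hx : (QuotientGroup.mk g : G ⧸ H) ∈ Fix)
        (hp : ((ι g * θb * (ι g)⁻¹, θb) : Gb × Gb) ∈ Pairs),
        e (Quot.mk r₁ ⟨QuotientGroup.mk g, hx⟩) =
          Quot.mk r₂ ⟨(ι g * θb * (ι g)⁻¹, θb), hp⟩ := by
  classical
  have hbb : θb * θb = 1 := by rw [← sq]; exact hb2
  have hbinv : θb⁻¹ = θb := by
    rw [← mul_one θb⁻¹, ← hb2]; group
  have hsq : ∀ u v : G, u * v⁻¹ = v * u⁻¹ ↔ v⁻¹ * u = u⁻¹ * v := by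
    intro u v
    constructor
    · intro h
      calc v⁻¹ * u = v⁻¹ * (u * v⁻¹) * v := by group
        _ = v⁻¹ * (v * u⁻¹) * v := by rw [h]
        _ = u⁻¹ * v := by group
    · intro h
      calc u * v⁻¹ = u * (v⁻¹ * u) * u⁻¹ := by group
        _ = u * (u⁻¹ * v) * u⁻¹ := by rw [h]
        _ = v * u⁻¹ := by group
  set p : G → Gb := fun g => ι g * θb * (ι g)⁻¹ with hpdef
  -- basic computations
  have hmul : ∀ c g : G, ι c * p g * (ι c)⁻¹ = p (c * g) := by
    intro c g; simp only [hpdef, map_mul, mul_inv_rev]; group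
  have hp1 : p 1 = θb := by simp [hpdef]
  -- lemma A : p x = θb ↔ x ∈ H
  have hA : ∀ x : G, p x = θb ↔ x ∈ H := by
    intro x
    constructor
    · intro h
      rw [hH]
      apply hι
      rw [hconj, hbinv]
      have hc : ι x * θb = θb * ι x := by
        have := congrArg (· * ι x) h
        simpa [hpdef, mul_assoc] using this
      rw [← hc, mul_assoc, hbb, mul_one]
    · intro h
      have hx : θ x = x := (hH x).mp h
      have e : ι x = θb * ι x * θb := by
        have := hconj x
        rwa [hx, hbinv] at this
      have hc : ι x * θb = θb * ι x :=
        calc ι x * θb = θb * ι x * θb * θb := by rw [← e]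
          _ = θb * ι x := by rw [mul_assoc, hbb, mul_one]
      show ι x * θb * (ι x)⁻¹ = θb
      rw [hc, mul_assoc, mul_inv_cancel, mul_one]
  -- lemma B : p g = p g' ↔ same coset
  have hB : ∀ g g' : G, p g = p g' ↔ (QuotientGroup.mk g : G ⧸ H) = QuotientGroup.mk g' := by
    intro g g'
    rw [QuotientGroup.eq]
    constructor
    · intro h
      have h2 : p (g'⁻¹ * g) = θb := by
        rw [← hmul, h, hmul]; simp [hp1]
      have := (hA _).mp h2
      simpa using H.inv_mem this
    · intro h
      have h2 : p (g'⁻¹ * g) = θb := (hA _).mpr (by simpa using H.inv_mem h)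
      have := congrArg (fun y => ι g' * y * (ι g')⁻¹) h2
      simp only [hmul] at this
      rw [mul_inv_cancel_left] at this
      rw [this, ← hp1, hmul, mul_one]
  -- commuting characterization
  have hCmul : ∀ g : G, p g * θb = ι (g * (θ g)⁻¹) ∧ θb * p g = ι (θ g * g⁻¹) := by
    intro g
    constructor
    · rw [map_mul, map_inv, hconj, mul_inv_rev, mul_inv_rev, inv_inv, hbinv]
      show ι g * θb * (ι g)⁻¹ * θb = _
      simp only [mul_assoc]
    · rw [map_mul, map_inv, hconj, hbinv]
      show θb * (ι g * θb * (ι g)⁻¹) = _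
      simp only [mul_assoc]
  have hC : ∀ g : G, (p g * θb = θb * p g) ↔ g * (θ g)⁻¹ = θ g * g⁻¹ := by
    intro g
    rw [(hCmul g).1, (hCmul g).2, hι.eq_iff]
  -- fix characterization
  have hFixC : ∀ g : G, ((QuotientGroup.mk g : G ⧸ H) ∈ Fix) ↔ p g * θb = θb * p g := by
    intro g
    constructor
    · intro h
      rw [hFix] at h
      obtain ⟨a, h1, h2⟩ := h
      have hmem : (θ a)⁻¹ * a ∈ H := QuotientGroup.eq.mp (h2.trans h1.symm)
      have he : θ ((θ a)⁻¹ * a) = (θ a)⁻¹ * a := (hH _).mp hmem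
      rw [map_mul, map_inv, hθ] at he
      -- he : a⁻¹ * θ a = (θ a)⁻¹ * a
      have hcom : p a * θb = θb * p a := by
        rw [hC]
        exact (hsq a (θ a)).mpr he.symm
      rwa [(hB g a).mpr (h1.symm)]
    · intro h
      rw [hC] at h
      rw [hFix]
      refine ⟨g, rfl, ?_⟩
      rw [QuotientGroup.eq, hH, map_mul, map_inv, hθ]
      exact ((hsq g (θ g)).mp h).symm
  -- membership in Pairs
  have hPmem : ∀ g : G, ((QuotientGroup.mk g : G ⧸ H) ∈ Fix) → ((p g, θb) : Gb × Gb) ∈ Pairs := by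
    intro g hg
    rw [hPairs]
    exact ⟨⟨g, rfl⟩, ⟨1, by simp⟩, (hFixC g).mp hg⟩
  -- the forward function on elements
  have hFixout : ∀ x : {x : G ⧸ H // x ∈ Fix},
      ((QuotientGroup.mk x.1.out : G ⧸ H) ∈ Fix) := by
    intro x; rw [QuotientGroup.out_eq']; exact x.2
  let f0 : {x : G ⧸ H // x ∈ Fix} → Quot r₂ := fun x =>
    Quot.mk r₂ ⟨(p x.1.out, θb), hPmem _ (hFixout x)⟩
  have hf0 : ∀ (x : {x : G ⧸ H // x ∈ Fix}) (g : G) (hg : x.1 = QuotientGroup.mk g)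
      (hp : ((p g, θb) : Gb × Gb) ∈ Pairs), f0 x = Quot.mk r₂ ⟨(p g, θb), hp⟩ := by
    intro x g hg hp
    have : p x.1.out = p g := (hB _ _).mpr (by rw [QuotientGroup.out_eq', hg])
    show Quot.mk r₂ ⟨(p x.1.out, θb), _⟩ = Quot.mk r₂ ⟨(p g, θb), hp⟩
    exact congrArg (Quot.mk r₂)
      (Subtype.ext (show ((p x.1.out, θb) : Gb × Gb) = (p g, θb) by rw [this]))
  have hresp : ∀ a b, r₁ a b → f0 a = f0 b := by
    intro a b hab
    rw [hr₁] at hab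
    obtain ⟨h, hh, hsmul⟩ := hab
    apply Quot.sound
    rw [hr₂]
    refine ⟨h, ?_, ?_⟩
    · show ι h * p a.1.out * (ι h)⁻¹ = p b.1.out
      rw [hmul]
      apply (hB _ _).mpr
      calc (QuotientGroup.mk (h * a.1.out) : G ⧸ H)
          = h • (QuotientGroup.mk a.1.out : G ⧸ H) := rfl
        _ = h • a.1 := by rw [QuotientGroup.out_eq']
        _ = b.1 := hsmul
        _ = QuotientGroup.mk b.1.out := (QuotientGroup.out_eq' _).symm
    · show ι h * θb * (ι h)⁻¹ = θb
      exact (hA h).mpr hh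
  let f : Quot r₁ → Quot r₂ := Quot.lift f0 hresp
  -- r₂ is an equivalence
  have hequiv : Equivalence r₂ := by
    constructor
    · intro a; rw [hr₂]; exact ⟨1, by simp, by simp⟩
    · intro a b hab; rw [hr₂] at hab ⊢
      obtain ⟨c, h1, h2⟩ := hab
      refine ⟨c⁻¹, ?_, ?_⟩
      · rw [map_inv, ← h1]; group
      · rw [map_inv, ← h2]; group
    · intro a b c hab hbc; rw [hr₂] at hab hbc ⊢
      obtain ⟨u, h1, h2⟩ := hab
      obtain ⟨v, h3, h4⟩ := hbc
      refine ⟨v * u, ?_, ?_⟩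
      · rw [map_mul, ← h3, ← h1]; group
      · rw [map_mul, ← h4, ← h2]; group
  -- injectivity
  have hinj : Function.Injective f := by
    intro x y
    induction x using Quot.ind with | _ a =>
    induction y using Quot.ind with | _ b =>
    intro hfab
    have h := hequiv.eqvGen_iff.mp (Quot.eqvGen_exact hfab)
    rw [hr₂] at h
    obtain ⟨c, h1, h2⟩ := h
    simp only at h1 h2
    have hcH : c ∈ H := (hA c).mp h2
    apply Quot.sound
    rw [hr₁]
    refine ⟨c, hcH, ?_⟩
    rw [hmul] at h1
    have := (hB _ _).mp h1
    calc c • a.1 = c • (QuotientGroup.mk a.1.out : G ⧸ H) := by rw [QuotientGroup.out_eq']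
      _ = QuotientGroup.mk (c * a.1.out) := rfl
      _ = QuotientGroup.mk b.1.out := this
      _ = b.1 := QuotientGroup.out_eq' _
  -- surjectivity
  have hsurj : Function.Surjective f := by
    intro y
    induction y using Quot.ind with | _ q =>
    obtain ⟨qv, hqv⟩ := q
    have hq : qv ∈ {p : Gb × Gb | p.1 ∈ CartanConjClass ι θb ∧
        p.2 ∈ CartanConjClass ι θb ∧ p.1 * p.2 = p.2 * p.1} := by
      rw [← hPairs]; exact hqv
    obtain ⟨⟨a, ha⟩, ⟨b, hb⟩, hcomm⟩ := hq
    have hpa : qv.1 = p a := ha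
    have hpb : qv.2 = p b := hb
    have hcomm' : p (b⁻¹ * a) * θb = θb * p (b⁻¹ * a) := by
      have e1 : ι b⁻¹ * p a * (ι b⁻¹)⁻¹ = p (b⁻¹ * a) := hmul b⁻¹ a
      have e2 : ι b⁻¹ * p b * (ι b⁻¹)⁻¹ = θb := by rw [hmul, inv_mul_cancel, hp1]
      calc p (b⁻¹ * a) * θb
          = (ι b⁻¹ * p a * (ι b⁻¹)⁻¹) * (ι b⁻¹ * p b * (ι b⁻¹)⁻¹) := by rw [e1, e2]
        _ = ι b⁻¹ * (p a * p b) * (ι b⁻¹)⁻¹ := by group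
        _ = ι b⁻¹ * (p b * p a) * (ι b⁻¹)⁻¹ := by rw [← hpa, ← hpb, hcomm]
        _ = (ι b⁻¹ * p b * (ι b⁻¹)⁻¹) * (ι b⁻¹ * p a * (ι b⁻¹)⁻¹) := by group
        _ = θb * p (b⁻¹ * a) := by rw [e1, e2]
    have hgFix : (QuotientGroup.mk (b⁻¹ * a) : G ⧸ H) ∈ Fix := (hFixC _).mpr hcomm'
    refine ⟨Quot.mk r₁ ⟨QuotientGroup.mk (b⁻¹ * a), hgFix⟩, ?_⟩
    show f0 _ = _
    rw [hf0 _ (b⁻¹ * a) rfl (hPmem _ hgFix)]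
    apply Quot.sound
    rw [hr₂]
    refine ⟨b, ?_, ?_⟩
    · show ι b * p (b⁻¹ * a) * (ι b)⁻¹ = qv.1
      rw [hmul, mul_inv_cancel_left]
      exact hpa.symm
    · show ι b * θb * (ι b)⁻¹ = qv.2
      exact hpb.symm
  refine ⟨Equiv.ofBijective f ⟨hinj, hsurj⟩, ?_⟩
  intro g hx hp
  show f (Quot.mk r₁ ⟨QuotientGroup.mk g, hx⟩) = _
  exact hf0 _ g rfl hp
end

section
/- Let n ≥ 2, let m be an odd positive divisor of n, let ω_m = e^{2πi/m}, let G_{n,m} = SU(n)/⟨ω_m I⟩, and let τ be the automorphism of G_{n,m} induced by entrywise complex conjugation on SU(n). Then the fixed-point subgroup (G_{n,m})^τ equals the image, under the quotient map SU(n) → G_{n,m}, of the subgroup SO(n) = {A ∈ SU(n) : every entry of A is real} of real special orthogonal matrices; in particular (G_{n,m})^τ is isomorphic to SO(n). -/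
open Matrix in
/-- The special unitary group `SU(n, α)`, as a subgroup of the unitary group
`Matrix.unitaryGroup (Fin n) α`: the unitary matrices of determinant `1`. -/
def SpecialUnitary (n : ℕ) (α : Type*) [CommRing α] [StarRing α] :
    Subgroup (Matrix.unitaryGroup (Fin n) α) where
  carrier := {A | (A : Matrix (Fin n) (Fin n) α).det = 1}
  one_mem' := by simp
  mul_mem' := by
    intro a b ha hb
    simp only [Set.mem_setOf_eq] at *
    rw [Matrix.UnitaryGroup.mul_val, Matrix.det_mul, ha, hb, one_mul]
  inv_mem' := by
    intro a ha
    simp only [Set.mem_setOf_eq] at *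
    rw [Matrix.UnitaryGroup.inv_val, Matrix.star_eq_conjTranspose, Matrix.det_conjTranspose, ha,
      star_one]

/-- The fixed-point subgroup `G^θ` of an automorphism `θ` of `G`. -/
def fixedSubgroup {G : Type*} [Group G] (θ : G ≃* G) : Subgroup G where
  carrier := {g | θ g = g}
  one_mem' := map_one θ
  mul_mem' := by
    intro a b ha hb
    simp only [Set.mem_setOf_eq] at *
    rw [map_mul, ha, hb]
  inv_mem' := by
    intro a ha
    simp only [Set.mem_setOf_eq] at *
    rw [map_inv, ha]


/-!
The coset of `A ∈ SU(n)` is `τ`-fixed iff `Ā = A z^j` for a power of `z = ω_m I`. Conjugation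
inverts `z`, and since `z^m = 1` with `m` odd, `z^j = z^{2t}` is a square; then `A z^t` is a real
representative of the coset. The quotient map is injective on real matrices: a power `z^k` fixed by
conjugation satisfies `z^{2k} = 1 = z^{mk}`, hence `z^k = 1`.
-/

section FixedPoints

variable {G : Type*} [Group G] {z : G} {m : ℕ}

theorem exists_zpow_sq_eq_zpow (hzm : z ^ m = 1) (hm : Odd m) (j : ℤ) :
    ∃ t : ℤ, (z ^ t) ^ 2 = z ^ j := by
  obtain ⟨l, rfl⟩ := hm
  refine ⟨j * (l + 1), ?_⟩
  calc (z ^ (j * (l + 1))) ^ 2 = (z ^ (2 * l + 1)) ^ j * z ^ j := by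
        rw [← zpow_natCast, ← zpow_mul, ← zpow_natCast, ← zpow_mul, ← zpow_add]
        push_cast; ring_nf
    _ = z ^ j := by rw [hzm, one_zpow, one_mul]

theorem eq_one_of_sq_eq_one_of_pow_odd {x : G} (hxm : x ^ m = 1) (hm : Odd m) (hx : x ^ 2 = 1) :
    x = 1 := by
  simpa [Nat.coprime_two_left.2 hm] using pow_gcd_eq_one.2 ⟨hx, hxm⟩

variable (σ : G ≃* G)

theorem exists_mem_zpowers_mul_fixed (hσz : σ z = z⁻¹) (hzm : z ^ m = 1) (hm : Odd m) {A : G}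
    (hA : A⁻¹ * σ A ∈ Subgroup.zpowers z) : ∃ w ∈ Subgroup.zpowers z, σ (A * w) = A * w := by
  obtain ⟨j, hj⟩ := Subgroup.mem_zpowers_iff.1 hA
  obtain ⟨t, ht⟩ := exists_zpow_sq_eq_zpow hzm hm j
  refine ⟨z ^ t, Subgroup.zpow_mem_zpowers z t, ?_⟩
  rw [map_mul, map_zpow, hσz, inv_mul_eq_iff_eq_mul.1 hj.symm, ← ht]
  group

theorem eq_one_of_mem_zpowers_of_fixed (hσz : σ z = z⁻¹) (hzm : z ^ m = 1) (hm : Odd m) {x : G}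
    (hx : x ∈ Subgroup.zpowers z) (hσx : σ x = x) : x = 1 := by
  obtain ⟨k, rfl⟩ := Subgroup.mem_zpowers_iff.1 hx
  refine eq_one_of_sq_eq_one_of_pow_odd ?_ hm ?_
  · rw [← zpow_natCast, ← zpow_mul, mul_comm, zpow_mul, zpow_natCast, hzm, one_zpow]
  · rw [map_zpow, hσz, inv_zpow] at hσx
    rw [sq]
    nth_rw 1 [← hσx]
    exact inv_mul_cancel _

theorem setOf_fixed_quotient_eq_image (hσz : σ z = z⁻¹) (hzm : z ^ m = 1) (hm : Odd m)
    (τ : G ⧸ Subgroup.zpowers z → G ⧸ Subgroup.zpowers z) (hτ : ∀ A : G, τ A = σ A) :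
    {x | τ x = x} = (QuotientGroup.mk : G → G ⧸ Subgroup.zpowers z) '' {A | σ A = A} := by
  ext x
  constructor
  · intro hx
    obtain ⟨A, rfl⟩ := QuotientGroup.mk_surjective x
    rw [Set.mem_ofPred_eq, hτ, eq_comm, QuotientGroup.eq] at hx
    obtain ⟨w, hw, hfix⟩ := exists_mem_zpowers_mul_fixed σ hσz hzm hm hx
    exact ⟨A * w, hfix, QuotientGroup.mk_mul_of_mem A hw⟩
  · rintro ⟨A, hA, rfl⟩
    exact (hτ A).trans (congrArg _ hA)

variable [(Subgroup.zpowers z).Normal] (τ : G ⧸ Subgroup.zpowers z ≃* G ⧸ Subgroup.zpowers z)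
  (hτ : ∀ A : G, τ A = σ A)

def fixedSubgroupToQuotient : fixedSubgroup σ →* fixedSubgroup τ :=
  ((QuotientGroup.mk' _).comp (fixedSubgroup σ).subtype).codRestrict _ fun A =>
    (hτ A).trans (congrArg _ A.2)

theorem fixedSubgroupToQuotient_bijective (hσz : σ z = z⁻¹) (hzm : z ^ m = 1) (hm : Odd m) :
    Function.Bijective (fixedSubgroupToQuotient σ τ hτ) := by
  constructor
  · rw [injective_iff_map_eq_one]
    rintro ⟨A, hA⟩ h
    have hAz : A ∈ Subgroup.zpowers z := (QuotientGroup.eq_one_iff A).1 (congrArg Subtype.val h)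
    exact Subtype.ext (eq_one_of_mem_zpowers_of_fixed σ hσz hzm hm hAz hA)
  · rintro ⟨x, hx⟩
    have hx' : x ∈ {x | τ x = x} := hx
    rw [setOf_fixed_quotient_eq_image σ hσz hzm hm τ hτ] at hx'
    obtain ⟨A, hA, rfl⟩ := hx'
    exact ⟨⟨A, hA⟩, rfl⟩

end FixedPoints

namespace Matrix

variable {ι κ : Type*}

theorem map_conj_eq_self_iff {A : Matrix ι κ ℂ} :
    A.map (starRingEnd ℂ) = A ↔ ∀ i j, (A i j).im = 0 := by
  simp only [← Matrix.ext_iff, map_apply, Complex.conj_eq_iff_im]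

theorem map_re_map_ofReal {A : Matrix ι κ ℂ} (hA : ∀ i j, (A i j).im = 0) :
    (A.map Complex.re).map Complex.ofRealHom = A :=
  ext fun i j => Complex.ext rfl (hA i j).symm

variable [Fintype ι] [DecidableEq ι]

theorem map_ofReal_mem_unitaryGroup_iff {M : Matrix ι ι ℝ} :
    M.map Complex.ofRealHom ∈ unitaryGroup ι ℂ ↔ M ∈ unitaryGroup ι ℝ := by
  have hstar : star (M.map Complex.ofRealHom) = (star M).map Complex.ofRealHom :=
    (conjTranspose_map _ fun x => (Complex.conj_ofReal x).symm).symm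
  rw [mem_unitaryGroup_iff, mem_unitaryGroup_iff, hstar, ← Matrix.map_mul,
    ← (map_injective (f := Complex.ofRealHom) Complex.ofReal_injective).eq_iff,
    Matrix.map_one _ (map_zero _) (map_one _)]

theorem det_map_ofReal (M : Matrix ι ι ℝ) : (M.map Complex.ofRealHom).det = M.det :=
  (Complex.ofRealHom.map_det M).symm

end Matrix

namespace SpecialUnitary

def ofReal (n : ℕ) : SpecialUnitary n ℝ →* SpecialUnitary n ℂ where
  toFun R := ⟨⟨R.1.1.map Complex.ofRealHom, Matrix.map_ofReal_mem_unitaryGroup_iff.2 R.1.2⟩,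
    (Matrix.det_map_ofReal _).trans (congrArg _ R.2)⟩
  map_one' := Subtype.ext <| Subtype.ext <| Matrix.map_one _ (map_zero _) (map_one _)
  map_mul' _ _ := Subtype.ext <| Subtype.ext <| Matrix.map_mul (f := Complex.ofRealHom)

variable {n : ℕ}

theorem ofReal_injective : Function.Injective (ofReal n) := fun _ _ h =>
  Subtype.ext <| Subtype.ext <| Matrix.map_injective Complex.ofReal_injective
    (congrArg (fun A : SpecialUnitary n ℂ => A.1.1) h)

theorem mem_range_ofReal_iff {A : SpecialUnitary n ℂ} :
    A ∈ (ofReal n).range ↔ ∀ i j, (A.1.1 i j).im = 0 := by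
  constructor
  · rintro ⟨R, rfl⟩ i j
    exact Complex.ofReal_im _
  · intro hA
    have hmap := Matrix.map_re_map_ofReal hA
    have hU : A.1.1.map Complex.re ∈ Matrix.unitaryGroup (Fin n) ℝ :=
      Matrix.map_ofReal_mem_unitaryGroup_iff.1 (hmap ▸ A.1.2)
    have hdet : (A.1.1.map Complex.re).det = 1 := Complex.ofReal_injective <| by
      rw [← Matrix.det_map_ofReal, hmap, Complex.ofReal_one]
      exact A.2
    exact ⟨⟨⟨_, hU⟩, hdet⟩, Subtype.ext <| Subtype.ext hmap⟩

end SpecialUnitary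

theorem stmt_12_general (n m : ℕ) (hm : 0 < m) (hodd : Odd m)
    (z : ↥(SpecialUnitary n ℂ))
    (hz : z.val.val =
      Complex.exp (2 * (Real.pi : ℂ) * Complex.I / (m : ℂ)) • (1 : Matrix (Fin n) (Fin n) ℂ))
    (Z : Subgroup ↥(SpecialUnitary n ℂ)) (hZ : Z = Subgroup.zpowers z) [Z.Normal]
    (σ : ↥(SpecialUnitary n ℂ) ≃* ↥(SpecialUnitary n ℂ))
    (hσ : ∀ A : ↥(SpecialUnitary n ℂ), (σ A).val.val = (A.val.val).map (starRingEnd ℂ))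
    (τ : (↥(SpecialUnitary n ℂ) ⧸ Z) ≃* (↥(SpecialUnitary n ℂ) ⧸ Z))
    (hτ : ∀ A : ↥(SpecialUnitary n ℂ), τ (QuotientGroup.mk A) = QuotientGroup.mk (σ A)) :
    -- `(G_{n,m})^τ` is the image of `SO(n) ⊆ SU(n)` under the quotient map
    ({x : ↥(SpecialUnitary n ℂ) ⧸ Z | τ x = x} =
        (QuotientGroup.mk : ↥(SpecialUnitary n ℂ) → ↥(SpecialUnitary n ℂ) ⧸ Z) ''
          {A : ↥(SpecialUnitary n ℂ) | ∀ i j, (A.val.val i j).im = 0}) ∧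
      -- in particular, `(G_{n,m})^τ ≅ SO(n)` (`SO(n)` realized as `SU(n, ℝ)`)
      Nonempty (↥(fixedSubgroup τ) ≃* ↥(SpecialUnitary n ℝ)) := by
  subst hZ
  have hσz : σ z = z⁻¹ := Subtype.ext <| Subtype.ext <| by
    rw [hσ, show (z⁻¹).val.val = star z.val.val from rfl, hz]
    ext i j
    simp [Matrix.one_apply, eq_comm]
  have hzm : z ^ m = 1 := Subtype.ext <| Subtype.ext <| by
    simp [hz, smul_pow, (Complex.isPrimitiveRoot_exp m hm.ne').pow_eq_one]
  have hfix : ∀ A, σ A = A ↔ ∀ i j, (A.val.val i j).im = 0 := fun A => by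
    rw [← Matrix.map_conj_eq_self_iff, ← hσ, Subtype.ext_iff, Subtype.ext_iff]
  have hrange : fixedSubgroup σ = (SpecialUnitary.ofReal n).range :=
    Subgroup.ext fun A => (hfix A).trans SpecialUnitary.mem_range_ofReal_iff.symm
  refine ⟨?_, ⟨?_⟩⟩
  · simpa only [hfix] using setOf_fixed_quotient_eq_image σ hσz hzm hodd τ hτ
  · exact (MulEquiv.ofBijective _
      (fixedSubgroupToQuotient_bijective σ τ hτ hσz hzm hodd)).symm.trans <|
      (MulEquiv.subgroupCongr hrange).trans
        (MonoidHom.ofInjective SpecialUnitary.ofReal_injective).symm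

/-- for `2 ≤ n`, `m` an odd divisor of `n`, `G_{n,m} = SU(n)/⟨ω_m I⟩` and `τ`
the automorphism induced by entrywise complex conjugation, the fixed-point subgroup
`(G_{n,m})^τ` is the image under the quotient map of the subgroup
`SO(n) = {A ∈ SU(n) : all entries of A real}`; in particular it is isomorphic to `SO(n)`. -/
theorem stmt_12 (n m : ℕ) (hn : 2 ≤ n) (hm : 0 < m) (hdvd : m ∣ n) (hodd : Odd m)
    (z : ↥(SpecialUnitary n ℂ))
    (hz : z.val.val =
      Complex.exp (2 * (Real.pi : ℂ) * Complex.I / (m : ℂ)) • (1 : Matrix (Fin n) (Fin n) ℂ))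
    (Z : Subgroup ↥(SpecialUnitary n ℂ)) (hZ : Z = Subgroup.zpowers z) [Z.Normal]
    (σ : ↥(SpecialUnitary n ℂ) ≃* ↥(SpecialUnitary n ℂ))
    (hσ : ∀ A : ↥(SpecialUnitary n ℂ), (σ A).val.val = (A.val.val).map (starRingEnd ℂ))
    (τ : (↥(SpecialUnitary n ℂ) ⧸ Z) ≃* (↥(SpecialUnitary n ℂ) ⧸ Z))
    (hτ : ∀ A : ↥(SpecialUnitary n ℂ), τ (QuotientGroup.mk A) = QuotientGroup.mk (σ A))
    (hτc : Continuous τ) :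
    -- `(G_{n,m})^τ` is the image of `SO(n) ⊆ SU(n)` under the quotient map
    ({x : ↥(SpecialUnitary n ℂ) ⧸ Z | τ x = x} =
        (QuotientGroup.mk : ↥(SpecialUnitary n ℂ) → ↥(SpecialUnitary n ℂ) ⧸ Z) ''
          {A : ↥(SpecialUnitary n ℂ) | ∀ i j, (A.val.val i j).im = 0}) ∧
      -- in particular, `(G_{n,m})^τ ≅ SO(n)` (`SO(n)` realized as `SU(n, ℝ)`)
      Nonempty (↥(fixedSubgroup τ) ≃* ↥(SpecialUnitary n ℝ)) :=
  stmt_12_general n m hm hodd z hz Z hZ σ hσ τ hτ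
end
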